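/- Let a_0 > 0 and a_1, a_2, ..., a_T ≥ 0. Then ∑_{t=1}^T a_t / (a_0 + ∑_{i=1}^t a_i) ≤ ln(1 + (∑_{i=1}^T a_i)/a_0). -/

import Mathlib

/-!
With `S t = a 0 + a 1 + ⋯ + a t`, the `t`-th term is `1 - S (t-1) / S t ≤ log (S t / S (t-1))`
(from `1 - y⁻¹ ≤ log y`), and these bounds telescope to `log (S T / a 0)`.
-/

open Finset Real

lemma div_add_le_log_add_sub_log {s x : ℝ} (hs : 0 < s) (hx : 0 ≤ x) :
    x / (s + x) ≤ log (s + x) - log s := by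
  have hsx : 0 < s + x := by linarith
  have key := one_sub_inv_le_log_of_pos (div_pos hsx hs)
  rw [log_div hsx.ne' hs.ne', inv_div] at key
  calc x / (s + x) = 1 - s / (s + x) := by field_simp; ring
    _ ≤ log (s + x) - log s := key

lemma sum_div_partial_sum_le_log_sub_log (a : ℕ → ℝ) (ha0 : 0 < a 0) (T : ℕ)
    (ha : ∀ t, 1 ≤ t → t ≤ T → 0 ≤ a t) :
    ∑ t ∈ Icc 1 T, a t / (a 0 + ∑ i ∈ Icc 1 t, a i)
      ≤ log (a 0 + ∑ i ∈ Icc 1 T, a i) - log (a 0) := by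
  induction T with
  | zero => simp
  | succ T ih =>
    have hT : 1 ≤ T + 1 := Nat.le_add_left 1 T
    have hS : 0 < a 0 + ∑ i ∈ Icc 1 T, a i :=
      add_pos_of_pos_of_nonneg ha0 <| sum_nonneg fun i hi =>
        ha i (mem_Icc.mp hi).1 (by linarith [(mem_Icc.mp hi).2])
    have step := div_add_le_log_add_sub_log hS (ha (T + 1) hT le_rfl)
    have prev := ih fun t h1 h2 => ha t h1 (h2.trans T.le_succ)
    rw [sum_Icc_succ_top hT, sum_Icc_succ_top hT, ← add_assoc]
    linarith

theorem stmt_3 (T : ℕ) (a : ℕ → ℝ) (ha0 : 0 < a 0)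
    (ha : ∀ t, 1 ≤ t → t ≤ T → 0 ≤ a t) :
    ∑ t ∈ Finset.Icc 1 T, a t / (a 0 + ∑ i ∈ Finset.Icc 1 t, a i)
      ≤ Real.log (1 + (∑ i ∈ Finset.Icc 1 T, a i) / a 0) := by
  have hsum : 0 ≤ ∑ i ∈ Icc 1 T, a i :=
    sum_nonneg fun i hi => ha i (mem_Icc.mp hi).1 (mem_Icc.mp hi).2
  rw [one_add_div ha0.ne', log_div (by linarith) ha0.ne']
  exact sum_div_partial_sum_le_log_sub_log a ha0 T ha
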